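/- arXiv:math/0605600 — 7 statements merged into one kernel-verified Lean document; each statement's English description precedes it below -/
import Mathlib

section
/- Let a group G act on a set X, and let Z ⊆ X be a cross section (i.e. Z meets each orbit exactly once). Then Z is a global cross section (i.e. all points of Z have the same isotropy subgroup) if and only if the family {gZ : g ∈ G} forms a partition of X, meaning g₁Z ∩ g₂Z ≠ ∅ implies g₁Z = g₂Z for all g₁, g₂ ∈ G. -/
open Pointwise

/-- A cross section `Z` is global (all its points have the same isotropy subgroup) iff
the family of proportional sets `g • Z` forms a partition of `X`. -/
theorem stmt0 {G X : Type*} [Group G] [MulAction G X] (Z : Set X)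
    (hZ : ∀ x : X, ∃! z, z ∈ Z ∧ z ∈ MulAction.orbit G x) :
    (∀ z₁ ∈ Z, ∀ z₂ ∈ Z, MulAction.stabilizer G z₁ = MulAction.stabilizer G z₂) ↔
      (∀ g₁ g₂ : G, (g₁ • Z ∩ g₂ • Z).Nonempty → g₁ • Z = g₂ • Z) := by
  constructor
  · rintro h g₁ g₂ ⟨x, ⟨z₁, hz₁, rfl⟩, z₂, hz₂, hx⟩
    simp only at hx
    have horb : z₂ ∈ MulAction.orbit G z₁ := ⟨g₂⁻¹ * g₁, by
      simp only [mul_smul]; rw [← hx]; simp⟩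
    obtain ⟨w, -, hw⟩ := hZ z₁
    have e1 := hw z₂ ⟨hz₂, horb⟩
    have e2 := hw z₁ ⟨hz₁, MulAction.mem_orbit_self z₁⟩
    subst e1; subst e2
    have hstab : (g₂⁻¹ * g₁) ∈ MulAction.stabilizer G z₁ := by
      simp only [MulAction.mem_stabilizer_iff, mul_smul]; rw [← hx]; simp
    ext y
    constructor
    · rintro ⟨z, hz, rfl⟩
      refine ⟨z, hz, ?_⟩
      have : (g₂⁻¹ * g₁) ∈ MulAction.stabilizer G z := (h z₁ hz₁ z hz) ▸ hstab
      have := MulAction.mem_stabilizer_iff.mp this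
      calc g₂ • z = g₂ • (g₂⁻¹ * g₁) • z := by rw [this]
        _ = g₁ • z := by simp [mul_smul]
    · rintro ⟨z, hz, rfl⟩
      refine ⟨z, hz, ?_⟩
      have : (g₂⁻¹ * g₁) ∈ MulAction.stabilizer G z := (h z₁ hz₁ z hz) ▸ hstab
      have := MulAction.mem_stabilizer_iff.mp this
      calc g₁ • z = g₂ • (g₂⁻¹ * g₁) • z := by rw [mul_smul]; simp
        _ = g₂ • z := by rw [this]
  · intro h z₁ hz₁ z₂ hz₂
    have key : ∀ z ∈ Z, ∀ w ∈ Z, ∀ g ∈ MulAction.stabilizer G z,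
        g ∈ MulAction.stabilizer G w := by
      intro z hz w hw g hg
      have hne : ((g • Z) ∩ ((1 : G) • Z)).Nonempty := by
        refine ⟨z, ⟨z, hz, MulAction.mem_stabilizer_iff.mp hg⟩, ⟨z, hz, one_smul _ _⟩⟩
      have hZZ := h g 1 hne
      rw [one_smul] at hZZ
      have : g • w ∈ Z := hZZ ▸ ⟨w, hw, rfl⟩
      obtain ⟨u, -, hu⟩ := hZ w
      have e1 := hu (g • w) ⟨this, ⟨g, rfl⟩⟩
      have e2 := hu w ⟨hw, MulAction.mem_orbit_self w⟩
      exact MulAction.mem_stabilizer_iff.mpr (e1.trans e2.symm)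
    ext g
    exact ⟨fun hg => key z₁ hz₁ z₂ hz₂ g hg, fun hg => key z₂ hz₂ z₁ hz₁ g hg⟩
end

section
/- Let G act on X and on Y, with the action on Y transitive, and let ỹ : X → Y be an equivariant map satisfying: for all g ∈ G and x ∈ X, ỹ(x) = ỹ(gx) if and only if x = gx. Then for each y₀ ∈ Y, the fiber ỹ⁻¹({y₀}) is a global cross section, i.e., it meets every G-orbit in X exactly once and all its points have the same isotropy subgroup. -/
/-- If `G` acts on `X` and transitively on `Y`, and `ỹ : X → Y` is equivariant with
`ỹ x = ỹ (g • x) ↔ x = g • x`, then each fiber of `ỹ` is a global cross section. -/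
theorem stmt2 {G X Y : Type*} [Group G] [MulAction G X] [MulAction G Y]
    (htrans : MulAction.IsPretransitive G Y) (ytil : X → Y)
    (hequi : ∀ (g : G) (x : X), ytil (g • x) = g • ytil x)
    (hcond : ∀ (g : G) (x : X), ytil x = ytil (g • x) ↔ x = g • x) (y₀ : Y) :
    (∀ x : X, ∃! z, z ∈ ytil ⁻¹' {y₀} ∧ z ∈ MulAction.orbit G x) ∧
      (∀ z₁ ∈ ytil ⁻¹' {y₀}, ∀ z₂ ∈ ytil ⁻¹' {y₀},
        MulAction.stabilizer G z₁ = MulAction.stabilizer G z₂) := by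
  constructor
  · intro x
    obtain ⟨g, hg⟩ := htrans.exists_smul_eq (ytil x) y₀
    refine ⟨g • x, ⟨by simp [hequi, hg], g, rfl⟩, ?_⟩
    rintro z ⟨hz, h, rfl⟩
    have h1 : ytil (h • x) = ytil ((g * h⁻¹) • h • x) := by
      rw [hz]
      have : (g * h⁻¹) • h • x = g • x := by rw [smul_smul, inv_mul_cancel_right]
      rw [this, hequi, hg]
    have h2 := (hcond _ _).mp h1
    simp only [smul_smul, inv_mul_cancel_right] at h2
    exact h2
  · have key : ∀ z ∈ ytil ⁻¹' {y₀}, MulAction.stabilizer G z = MulAction.stabilizer G y₀ := by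
      intro z hz
      have hz' : ytil z = y₀ := hz
      ext g
      simp only [MulAction.mem_stabilizer_iff]
      constructor
      · intro h
        have := hequi g z
        rw [h, hz'] at this
        exact this.symm
      · intro h
        have : ytil z = ytil (g • z) := by rw [hequi, hz', h]
        exact ((hcond g z).mp this).symm
    intro z₁ h₁ z₂ h₂
    rw [key z₁ h₁, key z₂ h₂]
end

section
/- Let Z be a global cross section with common isotropy subgroup G₀ and let Z' ⊆ X be any global cross section. Then Z' can be written in the form Z' = {g n_z z : z ∈ Z} for some g ∈ G and elements n_z ∈ N (the normalizer of G₀ in G), one for each z ∈ Z. -/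
/-!
Fix `z₀ ∈ Z` and move each `z ∈ Z` into `Z'` by some `k z`. The stabilizer of `k z • z` is
`k z G₀ (k z)⁻¹`, and these conjugates all coincide because `Z'` has constant isotropy, so
`(k z₀)⁻¹ k z` normalizes `G₀`. Since `Z` meets every orbit and `Z'` meets each orbit at most
once, `Z' = {k z • z : z ∈ Z} = {k z₀ ((k z₀)⁻¹ k z) • z : z ∈ Z}`.
-/

open MulAction

section CrossSection

variable {G α : Type*} [Group G] [MulAction G α]

theorem inv_mul_mem_normalizer_of_stabilizer_smul_eq {H : Subgroup G} {x y : α} {a b : G}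
    (hx : stabilizer G x = H) (hy : stabilizer G y = H)
    (h : stabilizer G (a • x) = stabilizer G (b • y)) :
    a⁻¹ * b ∈ Subgroup.normalizer (H : Set G) := by
  rw [Subgroup.mem_normalizer_iff_map_conj_eq]
  calc H.map (MulAut.conj (a⁻¹ * b)) = stabilizer G ((a⁻¹ * b) • y) := by
        rw [stabilizer_smul_eq_stabilizer_map_conj, hy, MulEquiv.toMonoidHom_eq_coe]
    _ = (stabilizer G (b • y)).map (MulAut.conj a⁻¹).toMonoidHom := by
        rw [mul_smul, stabilizer_smul_eq_stabilizer_map_conj]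
    _ = stabilizer G (a⁻¹ • a • x) := by
        rw [← h, ← stabilizer_smul_eq_stabilizer_map_conj]
    _ = H := by rw [inv_smul_smul, hx]

theorem eq_image_smul_of_smul_mem {Z Z' : Set α} (k : α → G)
    (hZ : ∀ x, ∃ z ∈ Z, z ∈ orbit G x) (hZ' : ∀ x, (Z' ∩ orbit G x).Subsingleton)
    (hk : ∀ z ∈ Z, k z • z ∈ Z') :
    Z' = (fun z => k z • z) '' Z := by
  ext x
  constructor
  · intro hx
    obtain ⟨z, hz, hzx⟩ := hZ x
    have hkz : k z • z ∈ orbit G x := mem_orbit_of_mem_orbit (k z) hzx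
    exact ⟨z, hz, hZ' x ⟨hk z hz, hkz⟩ ⟨hx, mem_orbit_self x⟩⟩
  · rintro ⟨z, hz, rfl⟩
    exact hk z hz

end CrossSection

/-- Any global cross section `Z'` can be written as `{g n_z z : z ∈ Z}` where `Z` is a
given global cross section with common isotropy subgroup `G₀`, `g ∈ G`, and the
elements `n_z` lie in the normalizer `N` of `G₀`. -/
theorem stmt7 {G X : Type*} [Group G] [MulAction G X] (Z Z' : Set X) (G₀ : Subgroup G)
    (hcs : ∀ x : X, ∃! z, z ∈ Z ∧ z ∈ MulAction.orbit G x)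
    (hglob : ∀ z ∈ Z, MulAction.stabilizer G z = G₀)
    (hcs' : ∀ x : X, ∃! z', z' ∈ Z' ∧ z' ∈ MulAction.orbit G x)
    (hglob' : ∀ z₁ ∈ Z', ∀ z₂ ∈ Z',
      MulAction.stabilizer G z₁ = MulAction.stabilizer G z₂) :
    ∃ (g : G) (n : X → G), (∀ z ∈ Z, n z ∈ Subgroup.normalizer (G₀ : Set G)) ∧
      Z' = (fun z => (g * n z) • z) '' Z := by
  have hmove : ∀ x : X, ∃ k : G, k • x ∈ Z' := fun x => by
    obtain ⟨_, ⟨hz', k, rfl⟩, -⟩ := hcs' x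
    exact ⟨k, hz'⟩
  choose k hk using hmove
  have hZ' : Z' = (fun z => k z • z) '' Z :=
    eq_image_smul_of_smul_mem k (fun x => (hcs x).exists)
      (fun x _ h₁ _ h₂ => (hcs' x).unique h₁ h₂) (fun z _ => hk z)
  rcases Z.eq_empty_or_nonempty with rfl | ⟨z₀, hz₀⟩
  · exact ⟨1, k, by simp, by simpa using hZ'⟩
  · refine ⟨k z₀, fun z => (k z₀)⁻¹ * k z, fun z hz => ?_, by simpa only [mul_inv_cancel_left]⟩
    exact inv_mul_mem_normalizer_of_stabilizer_smul_eq (hglob z₀ hz₀) (hglob z hz)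
      (hglob' _ (hk z₀) _ (hk z))
end

section
/- Let Z be a global cross section with common isotropy subgroup G₀, and Z' = {g₀ n_z z : z ∈ Z} another global cross section with g₀ ∈ G, n_z ∈ N (normalizer of G₀). Write x ∈ X as x = gz = g'z' with z ∈ Z, z' = g₀ n_z z ∈ Z'. Then the equivariant parts satisfy y' = y n_z⁻¹ g₀⁻¹, where y = gG₀ ∈ G/G₀ and y' = g'G₀' ∈ G/G₀' with G₀' = g₀G₀g₀⁻¹; i.e., g'G₀' = gG₀ n_z⁻¹ g₀⁻¹ as subsets of G. -/
/-! From `g • z = (g' * g₀ * n) • z` the element `h = (g' * g₀ * n)⁻¹ * g` fixes `z`, so lies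
in `G₀`. Hence `g G₀ n⁻¹ g₀⁻¹ = g' g₀ (n (h G₀) n⁻¹) g₀⁻¹`, and `h G₀ = G₀` and `n G₀ n⁻¹ = G₀`
reduce this to `g' (g₀ G₀ g₀⁻¹)`. -/

theorem MulAction.inv_mul_mem_stabilizer_of_smul_eq {G X : Type*} [Group G] [MulAction G X]
    {a b : G} {x : X} (h : a • x = b • x) : a⁻¹ * b ∈ stabilizer G x := by
  rw [mem_stabilizer_iff, mul_smul, ← h, inv_smul_smul]

theorem Subgroup.image_mul_left_map_conj_eq {G : Type*} [Group G] {H : Subgroup G}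
    {n h : G} (hn : n ∈ normalizer (H : Set G)) (hh : h ∈ H) (a g₀ : G) :
    (a * ·) '' (H.map (MulAut.conj g₀).toMonoidHom : Set G) =
      (fun b => a * g₀ * n * h * b * n⁻¹ * g₀⁻¹) '' H := by
  have hcomp : (fun b => a * g₀ * n * h * b * n⁻¹ * g₀⁻¹) =
      (a * ·) ∘ MulAut.conj g₀ ∘ MulAut.conj n ∘ (h • ·) := by
    funext b
    simp only [Function.comp_apply, MulAut.conj_apply, smul_eq_mul, mul_assoc]
  rw [hcomp, Set.image_comp, Set.image_comp, Set.image_comp, Set.image_smul, smul_coe_set hh,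
    mem_normalizer_iff_conj_image_eq.mp hn, coe_map]
  rfl

theorem stmt9_general {G X : Type*} [Group G] [MulAction G X] (Z : Set X) (G₀ : Subgroup G)
    (hglob : ∀ z ∈ Z, MulAction.stabilizer G z = G₀)
    (g₀ n g g' : G) (hn : n ∈ Subgroup.normalizer (G₀ : Set G)) (z : X) (hz : z ∈ Z)
    (x : X) (hx1 : x = g • z) (hx2 : x = g' • ((g₀ * n) • z)) :
    (fun a => g' * a) ''
        ((Subgroup.map (MulAut.conj g₀).toMonoidHom G₀ : Subgroup G) : Set G) =
      (fun a => g * a * n⁻¹ * g₀⁻¹) '' (G₀ : Set G) := by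
  have hsmul : (g' * g₀ * n) • z = g • z := by rw [mul_assoc, mul_smul, ← hx2, hx1]
  have hh : (g' * g₀ * n)⁻¹ * g ∈ G₀ :=
    hglob z hz ▸ MulAction.inv_mul_mem_stabilizer_of_smul_eq hsmul
  rw [Subgroup.image_mul_left_map_conj_eq hn hh, mul_inv_cancel_left]

/-- Transformation of the equivariant part: if `x = g • z = g' • (g₀ n_z • z)` with
`z ∈ Z`, a global cross section with common isotropy subgroup `G₀`, and
`n_z` in the normalizer of `G₀`, then the equivariant parts satisfy
`y' = y n_z⁻¹ g₀⁻¹`, i.e. `g' G₀' = g G₀ n_z⁻¹ g₀⁻¹` as subsets of `G`, where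
`G₀' = g₀ G₀ g₀⁻¹`. -/
theorem stmt9 {G X : Type*} [Group G] [MulAction G X] (Z : Set X) (G₀ : Subgroup G)
    (hcs : ∀ x : X, ∃! z, z ∈ Z ∧ z ∈ MulAction.orbit G x)
    (hglob : ∀ z ∈ Z, MulAction.stabilizer G z = G₀)
    (g₀ n g g' : G) (hn : n ∈ Subgroup.normalizer (G₀ : Set G)) (z : X) (hz : z ∈ Z)
    (x : X) (hx1 : x = g • z) (hx2 : x = g' • ((g₀ * n) • z)) :
    (fun a => g' * a) ''
        ((Subgroup.map (MulAut.conj g₀).toMonoidHom G₀ : Subgroup G) : Set G) =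
      (fun a => g * a * n⁻¹ * g₀⁻¹) '' (G₀ : Set G) :=
  stmt9_general Z G₀ hglob g₀ n g g' hn z hz x hx1 hx2
end

section
/- Let g : ℝᵖ \ {0} → ℝ₊* satisfy g(tx) = t·g(x) for all t > 0 (positively homogeneous of degree 1) and g > 0. If a random vector x in ℝᵖ \ {0} has density f(x) = f_G(g(x)) with respect to Lebesgue measure, then the random variables g(x) and z = x/g(x) are independent, the density of g(x) with respect to dg is proportional to f_G(g)·g^{p-1}, and the distribution of z on Z = {x : g(x) = 1} does not depend on f_G (it depends only on g). -/
open MeasureTheory ProbabilityTheory Set Metric Module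
open scoped ENNReal

/-!
In polar coordinates `x = r • u` Lebesgue measure becomes `σ ⊗ r ^ (p - 1) dr` with `σ` a finite
measure on the unit sphere. Homogeneity gives `g x = r * g u` and `x / g x = u / g u`, so after the
substitution `t = r * g u` in the radial integral, the integral of `f_G (g x) φ (g x) ψ (x / g x)`
splits as `(∫ f_G t φ t t ^ (p - 1) dt) * (∫ ψ dκ)` with `κ` the cone measure of `{g = 1}`, which
depends on `g` alone. Thus the joint law of `(g x, x / g x)` is a product measure, and normalising
the total mass to `1` identifies both marginals.
-/

section ProductLaw

variable {Ω α β : Type*} [MeasurableSpace Ω] [MeasurableSpace α] [MeasurableSpace β]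

def HasProductLaw (μ : Measure Ω) (X : Ω → α) (Y : Ω → β) (ν₁ : Measure α) (ν₂ : Measure β) :
    Prop :=
  ∀ s t, MeasurableSet s → MeasurableSet t → μ (X ⁻¹' s ∩ Y ⁻¹' t) = ν₁ s * ν₂ t

namespace HasProductLaw

variable {μ : Measure Ω} {X : Ω → α} {Y : Ω → β} {ν₁ : Measure α} {ν₂ : Measure β}

theorem measure_preimage_left (h : HasProductLaw μ X Y ν₁ ν₂) {s : Set α} (hs : MeasurableSet s) :
    μ (X ⁻¹' s) = ν₁ s * ν₂ univ := by
  simpa using h s univ hs .univ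

theorem measure_preimage_right (h : HasProductLaw μ X Y ν₁ ν₂) {t : Set β}
    (ht : MeasurableSet t) : μ (Y ⁻¹' t) = ν₁ univ * ν₂ t := by
  simpa using h univ t .univ ht

theorem map_left (h : HasProductLaw μ X Y ν₁ ν₂) (hX : Measurable X) :
    μ.map X = ν₂ univ • ν₁ := by
  ext s hs
  rw [Measure.map_apply hX hs, h.measure_preimage_left hs, Measure.smul_apply, smul_eq_mul,
    mul_comm]

variable [IsProbabilityMeasure μ]

theorem measure_univ_mul_measure_univ (h : HasProductLaw μ X Y ν₁ ν₂) :
    ν₁ univ * ν₂ univ = 1 := by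
  rw [← h.measure_preimage_left .univ, preimage_univ, measure_univ]

theorem measure_univ_right_ne_zero (h : HasProductLaw μ X Y ν₁ ν₂) : ν₂ univ ≠ 0 := by
  intro h0
  simpa [h0] using h.measure_univ_mul_measure_univ

theorem measure_univ_right_ne_top (h : HasProductLaw μ X Y ν₁ ν₂) : ν₂ univ ≠ ⊤ := by
  intro htop
  have h₁ := ENNReal.eq_inv_of_mul_eq_one_left h.measure_univ_mul_measure_univ
  simpa [htop, h₁] using h.measure_univ_mul_measure_univ

theorem indepFun (h : HasProductLaw μ X Y ν₁ ν₂) : IndepFun X Y μ := by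
  rw [indepFun_iff_measure_inter_preimage_eq_mul]
  intro s t hs ht
  rw [h s t hs ht, h.measure_preimage_left hs, h.measure_preimage_right ht]
  calc ν₁ s * ν₂ t = ν₁ s * ν₂ t * (ν₁ univ * ν₂ univ) := by
        rw [h.measure_univ_mul_measure_univ, mul_one]
    _ = ν₁ s * ν₂ univ * (ν₁ univ * ν₂ t) := by ring

theorem map_right (h : HasProductLaw μ X Y ν₁ ν₂) (hY : Measurable Y) :
    μ.map Y = (ν₂ univ)⁻¹ • ν₂ := by
  ext t ht
  rw [Measure.map_apply hY ht, h.measure_preimage_right ht, Measure.smul_apply, smul_eq_mul,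
    ← ENNReal.eq_inv_of_mul_eq_one_left h.measure_univ_mul_measure_univ]

end HasProductLaw

end ProductLaw

theorem setLIntegral_Ioi_comp_mul_right {c : ℝ} (hc : 0 < c) (F : ℝ → ℝ≥0∞) :
    ∫⁻ t in Ioi 0, F (t * c) = ENNReal.ofReal c⁻¹ * ∫⁻ t in Ioi 0, F t := by
  have hmul := measurableEmbedding_mulRight₀ hc.ne'
  have hpre : (· * c) ⁻¹' Ioi (0 : ℝ) = Ioi 0 := by
    ext t; simp [mul_pos_iff_of_pos_right hc]
  calc ∫⁻ t in Ioi 0, F (t * c) = ∫⁻ t in Ioi 0, F t ∂(volume.map (· * c)) := by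
        rw [hmul.restrict_map, hmul.lintegral_map, hpre]
    _ = ENNReal.ofReal c⁻¹ * ∫⁻ t in Ioi 0, F t := by
        rw [Real.map_volume_mul_right hc.ne', Measure.restrict_smul, lintegral_smul_measure,
          abs_of_pos (inv_pos.2 hc), smul_eq_mul]

theorem setLIntegral_Ioi_pow_mul_comp_mul_right {c : ℝ} (hc : 0 < c) (n : ℕ) (φ : ℝ → ℝ≥0∞) :
    ∫⁻ t in Ioi 0, ENNReal.ofReal (t ^ n) * φ (t * c) =
      ENNReal.ofReal (c⁻¹ ^ (n + 1)) * ∫⁻ t in Ioi 0, ENNReal.ofReal (t ^ n) * φ t := by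
  have hpow (t : ℝ) :
      ENNReal.ofReal (t ^ n) = ENNReal.ofReal (c⁻¹ ^ n) * ENNReal.ofReal ((t * c) ^ n) := by
    rw [← ENNReal.ofReal_mul (by positivity), ← mul_pow, mul_comm t, inv_mul_cancel_left₀ hc.ne']
  calc ∫⁻ t in Ioi 0, ENNReal.ofReal (t ^ n) * φ (t * c)
      = ∫⁻ t in Ioi 0, ENNReal.ofReal (c⁻¹ ^ n) * (ENNReal.ofReal ((t * c) ^ n) * φ (t * c)) :=
        lintegral_congr fun t => by rw [hpow t, mul_assoc]
    _ = ENNReal.ofReal (c⁻¹ ^ (n + 1)) * ∫⁻ t in Ioi 0, ENNReal.ofReal (t ^ n) * φ t := by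
        rw [lintegral_const_mul' _ _ ENNReal.ofReal_ne_top,
          setLIntegral_Ioi_comp_mul_right hc fun t => ENNReal.ofReal (t ^ n) * φ t, ← mul_assoc,
          ← ENNReal.ofReal_mul (by positivity), pow_succ]

theorem lintegral_volumeIoiPow (n : ℕ) {φ : ℝ → ℝ≥0∞} (hφ : Measurable φ) :
    ∫⁻ r, φ r ∂Measure.volumeIoiPow n = ∫⁻ t in Ioi 0, ENNReal.ofReal (t ^ n) * φ t := by
  rw [Measure.volumeIoiPow, lintegral_withDensity_eq_lintegral_mul _ (by fun_prop)
    (by fun_prop : Measurable fun r : Ioi (0 : ℝ) => φ r)]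
  exact lintegral_subtype_comap measurableSet_Ioi fun t => ENNReal.ofReal (t ^ n) * φ t

noncomputable def radialLaw (n : ℕ) (q : ℝ → ℝ) : Measure ℝ :=
  volume.withDensity fun t => if 0 < t then ENNReal.ofReal (q t * t ^ (n - 1)) else 0

theorem setLIntegral_Ioi_pow_mul_indicator_eq_radialLaw (n : ℕ) (q : ℝ → ℝ) {s : Set ℝ}
    (hs : MeasurableSet s) :
    ∫⁻ t in Ioi 0, ENNReal.ofReal (t ^ (n - 1)) * s.indicator (fun t => ENNReal.ofReal (q t)) t =
      radialLaw n q s := by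
  rw [radialLaw, withDensity_apply _ hs, ← lintegral_indicator measurableSet_Ioi,
    ← lintegral_indicator hs]
  refine lintegral_congr fun t => ?_
  by_cases ht : 0 < t
  · by_cases hts : t ∈ s <;> simp [ht, hts, ENNReal.ofReal_mul' (pow_nonneg ht.le _), mul_comm]
  · by_cases hts : t ∈ s <;> simp [ht, hts]

section Homogeneous

variable {E : Type*} [NormedAddCommGroup E] [NormedSpace ℝ E] [MeasurableSpace E]

theorem lintegral_eq_lintegral_toSphere_prod [FiniteDimensional ℝ E] [BorelSpace E]
    [Nontrivial E] (μ : Measure E) [μ.IsAddHaarMeasure] (F : E → ℝ≥0∞) :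
    ∫⁻ x, F x ∂μ = ∫⁻ y, F ((y.2 : ℝ) • (y.1 : E))
      ∂μ.toSphere.prod (Measure.volumeIoiPow (finrank ℝ E - 1)) := by
  calc ∫⁻ x, F x ∂μ = ∫⁻ x : ({0}ᶜ : Set E), F x ∂μ.comap (↑) := by
        rw [lintegral_subtype_comap (measurableSet_singleton 0).compl, restrict_compl_singleton]
    _ = _ := by
      rw [← μ.measurePreserving_homeomorphUnitSphereProd.lintegral_comp_emb
        (homeomorphUnitSphereProd E).measurableEmbedding]
      simp only [← homeomorphUnitSphereProd_symm_apply_coe, Homeomorph.symm_apply_apply]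

-- For `B ⊆ {g = 1}` this is `dim E • μ (Ioo 0 1 • B)`, the cone measure of the level set.
noncomputable def coneMeasure (μ : Measure E) (g : E → ℝ) : Measure E :=
  (μ.toSphere.withDensity fun u => ENNReal.ofReal ((g u)⁻¹ ^ finrank ℝ E)).map
    fun u : sphere (0 : E) 1 => (g u)⁻¹ • (u : E)

theorem lintegral_coneMeasure [BorelSpace E] (μ : Measure E) {g : E → ℝ} (hg : Measurable g)
    {ψ : E → ℝ≥0∞} (hψ : Measurable ψ) :
    ∫⁻ z, ψ z ∂coneMeasure μ g =
      ∫⁻ u, ENNReal.ofReal ((g u)⁻¹ ^ finrank ℝ E) * ψ ((g u)⁻¹ • (u : E)) ∂μ.toSphere := by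
  rw [coneMeasure, lintegral_map hψ (by fun_prop),
    lintegral_withDensity_eq_lintegral_mul _ (by fun_prop) (by fun_prop)]
  rfl

theorem lintegral_comp_mul_comp_smul_inv [FiniteDimensional ℝ E] [BorelSpace E] [Nontrivial E]
    (μ : Measure E) [μ.IsAddHaarMeasure] {g : E → ℝ} (hg : Measurable g)
    (hgpos : ∀ x, x ≠ 0 → 0 < g x) (hghom : ∀ t : ℝ, 0 < t → ∀ x, x ≠ 0 → g (t • x) = t * g x)
    {φ : ℝ → ℝ≥0∞} (hφ : Measurable φ) {ψ : E → ℝ≥0∞} (hψ : Measurable ψ) :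
    ∫⁻ x, φ (g x) * ψ ((g x)⁻¹ • x) ∂μ =
      (∫⁻ t in Ioi 0, ENNReal.ofReal (t ^ (finrank ℝ E - 1)) * φ t) *
        ∫⁻ z, ψ z ∂coneMeasure μ g := by
  set I := ∫⁻ t in Ioi 0, ENNReal.ofReal (t ^ (finrank ℝ E - 1)) * φ t
  have hpolar (u : sphere (0 : E) 1) (r : Ioi (0 : ℝ)) :
      φ (g ((r : ℝ) • (u : E))) * ψ ((g ((r : ℝ) • (u : E)))⁻¹ • (r : ℝ) • (u : E)) =
        φ (r * g u) * ψ ((g u)⁻¹ • (u : E)) := by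
    have hu : (u : E) ≠ 0 := ne_of_mem_sphere u.2 one_ne_zero
    rw [hghom r r.2 u hu, smul_smul, mul_inv_rev, mul_assoc, inv_mul_cancel₀ r.2.ne', mul_one]
  have hradial (u : sphere (0 : E) 1) :
      ∫⁻ r, φ (r * g u) * ψ ((g u)⁻¹ • (u : E)) ∂Measure.volumeIoiPow (finrank ℝ E - 1) =
        I * (ENNReal.ofReal ((g u)⁻¹ ^ finrank ℝ E) * ψ ((g u)⁻¹ • (u : E))) := by
    have hgu : 0 < g u := hgpos u (ne_of_mem_sphere u.2 one_ne_zero)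
    rw [lintegral_mul_const _ (by fun_prop),
      lintegral_volumeIoiPow _ (φ := fun t => φ (t * g u)) (by fun_prop),
      setLIntegral_Ioi_pow_mul_comp_mul_right hgu, Nat.sub_add_cancel finrank_pos]
    ring
  rw [lintegral_eq_lintegral_toSphere_prod, lintegral_prod _ (by fun_prop)]
  simp only [hpolar, hradial]
  rw [lintegral_const_mul _ (by fun_prop), lintegral_coneMeasure μ hg hψ]

theorem hasProductLaw_withDensity_comp [FiniteDimensional ℝ E] [BorelSpace E] [Nontrivial E]
    (μ : Measure E) [μ.IsAddHaarMeasure] {g : E → ℝ} (hg : Measurable g)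
    (hgpos : ∀ x, x ≠ 0 → 0 < g x) (hghom : ∀ t : ℝ, 0 < t → ∀ x, x ≠ 0 → g (t • x) = t * g x)
    {q : ℝ → ℝ} (hq : Measurable q) :
    HasProductLaw (μ.withDensity fun x => ENNReal.ofReal (q (g x))) g (fun x => (g x)⁻¹ • x)
      (radialLaw (finrank ℝ E) q) (coneMeasure μ g) := by
  intro s t hs ht
  have hz : Measurable fun x : E => (g x)⁻¹ • x := by fun_prop
  rw [withDensity_apply _ ((hg hs).inter (hz ht)), ← lintegral_indicator ((hg hs).inter (hz ht))]
  calc ∫⁻ x, (g ⁻¹' s ∩ (fun x => (g x)⁻¹ • x) ⁻¹' t).indicator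
          (fun x => ENNReal.ofReal (q (g x))) x ∂μ
      = ∫⁻ x, s.indicator (fun t => ENNReal.ofReal (q t)) (g x) *
          t.indicator 1 ((g x)⁻¹ • x) ∂μ := by
        refine lintegral_congr fun x => ?_
        by_cases hx : g x ∈ s <;> by_cases hx' : (g x)⁻¹ • x ∈ t <;> simp [hx, hx']
    _ = radialLaw (finrank ℝ E) q s * coneMeasure μ g t := by
        rw [lintegral_comp_mul_comp_smul_inv μ hg hgpos hghom (by fun_prop)
          (measurable_one.indicator ht), lintegral_indicator_one ht,
          setLIntegral_Ioi_pow_mul_indicator_eq_radialLaw _ _ hs]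

end Homogeneous

theorem stmt16_general (p : ℕ) (hp : 0 < p)
    (g : EuclideanSpace ℝ (Fin p) → ℝ) (hgmeas : Measurable g)
    (hgpos : ∀ x : EuclideanSpace ℝ (Fin p), x ≠ 0 → 0 < g x)
    (hghom : ∀ t : ℝ, 0 < t → ∀ x : EuclideanSpace ℝ (Fin p), x ≠ 0 →
      g (t • x) = t * g x)
    (fG : ℝ → ℝ) (hfGmeas : Measurable fG)
    (μ : Measure (EuclideanSpace ℝ (Fin p)))
    (hμ : μ = volume.withDensity fun x => ENNReal.ofReal (fG (g x)))
    (hprob : IsProbabilityMeasure μ) :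
    IndepFun (fun x => g x) (fun x => (g x)⁻¹ • x) μ ∧
    (∃ c : ℝ≥0∞, c ≠ 0 ∧ c ≠ ⊤ ∧
      Measure.map g μ = volume.withDensity
        fun t : ℝ => if 0 < t then c * ENNReal.ofReal (fG t * t ^ (p - 1)) else 0) ∧
    (∀ fG' : ℝ → ℝ, Measurable fG' → (∀ t, 0 ≤ fG' t) →
      ∀ μ' : Measure (EuclideanSpace ℝ (Fin p)),
        μ' = volume.withDensity (fun x => ENNReal.ofReal (fG' (g x))) →
        IsProbabilityMeasure μ' →
        Measure.map (fun x => (g x)⁻¹ • x) μ =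
          Measure.map (fun x => (g x)⁻¹ • x) μ') := by
  have : Nontrivial (EuclideanSpace ℝ (Fin p)) := by
    have : Nonempty (Fin p) := ⟨⟨0, hp⟩⟩
    infer_instance
  have hz : Measurable fun x : EuclideanSpace ℝ (Fin p) => (g x)⁻¹ • x := by fun_prop
  have hlaw {q : ℝ → ℝ} (hq : Measurable q) :
      HasProductLaw (volume.withDensity fun x => ENNReal.ofReal (q (g x))) g
        (fun x => (g x)⁻¹ • x) (radialLaw p q) (coneMeasure volume g) := by
    simpa only [finrank_euclideanSpace_fin] using
      hasProductLaw_withDensity_comp volume hgmeas hgpos hghom hq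
  have hμlaw := hμ ▸ hlaw hfGmeas
  refine ⟨hμlaw.indepFun, ⟨coneMeasure volume g univ, hμlaw.measure_univ_right_ne_zero,
    hμlaw.measure_univ_right_ne_top, ?_⟩, fun fG' hfG' _ μ' hμ' _ => ?_⟩
  · rw [hμlaw.map_left hgmeas, radialLaw, ← withDensity_smul' _ _ hμlaw.measure_univ_right_ne_top]
    congr 1 with t
    by_cases ht : 0 < t <;> simp [ht]
  · subst hμ'
    rw [hμlaw.map_right hz, (hlaw hfG').map_right hz]

/-- For a star-shaped distribution with density `f_G(g(x))` with respect to Lebesgue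
measure on `ℝᵖ`, the "length" `g(x)` and "invariant part" `z = x/g(x)` are independent,
the law of `g(x)` has density proportional to `f_G(t) t^{p-1}` on `(0,∞)`, and the law
of `z` does not depend on `f_G`. -/
theorem stmt16 (p : ℕ) (hp : 0 < p)
    (g : EuclideanSpace ℝ (Fin p) → ℝ) (hgmeas : Measurable g)
    (hgpos : ∀ x : EuclideanSpace ℝ (Fin p), x ≠ 0 → 0 < g x)
    (hghom : ∀ t : ℝ, 0 < t → ∀ x : EuclideanSpace ℝ (Fin p), x ≠ 0 →
      g (t • x) = t * g x)
    (fG : ℝ → ℝ) (hfGmeas : Measurable fG) (hfGnn : ∀ t, 0 ≤ fG t)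
    (μ : Measure (EuclideanSpace ℝ (Fin p)))
    (hμ : μ = volume.withDensity fun x => ENNReal.ofReal (fG (g x)))
    (hprob : IsProbabilityMeasure μ) :
    IndepFun (fun x => g x) (fun x => (g x)⁻¹ • x) μ ∧
    (∃ c : ℝ≥0∞, c ≠ 0 ∧ c ≠ ⊤ ∧
      Measure.map g μ = volume.withDensity
        fun t : ℝ => if 0 < t then c * ENNReal.ofReal (fG t * t ^ (p - 1)) else 0) ∧
    (∀ fG' : ℝ → ℝ, Measurable fG' → (∀ t, 0 ≤ fG' t) →
      ∀ μ' : Measure (EuclideanSpace ℝ (Fin p)),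
        μ' = volume.withDensity (fun x => ENNReal.ofReal (fG' (g x))) →
        IsProbabilityMeasure μ' →
        Measure.map (fun x => (g x)⁻¹ • x) μ =
          Measure.map (fun x => (g x)⁻¹ • x) μ') :=
  stmt16_general p hp g hgmeas hgpos hghom fG hfGmeas μ hμ hprob
end

section
/- Let g : ℝᵖ \ {0} → ℝ₊* be positively homogeneous of degree 1 (g(tx) = t g(x) for t > 0), and suppose x has density f_G(g(x)) with respect to Lebesgue measure on ℝᵖ. Then the direction z' = x/‖x‖ has density c₀ · g(z')^{-p} with respect to the surface (volume) measure on the unit sphere S^{p-1}, where c₀ = ∫₀^∞ f_G(t) t^{p-1} dt = (∫_{S^{p-1}} g(u)^{-p} du)^{-1}. -/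
open MeasureTheory Set Metric
open scoped ENNReal

/-! In polar coordinates `x = r • u` (`u` on the unit sphere, `r > 0`) an additive Haar measure
becomes `μ.toSphere ⊗ r ^ (p - 1) dr`. Homogeneity gives `f_G (g (r • u)) = f_G (r * g u)`, and
the substitution `t = r * g u` turns the radial integral into `g(u)⁻ᵖ ∫₀^∞ f_G(t) tᵖ⁻¹ dt`, so the
direction has density `c₀ g(u)⁻ᵖ`; evaluating on the whole sphere gives `c₀ ∫ g(u)⁻ᵖ du = 1`. -/

lemma lintegral_Ioi_comp_mul_left {f : ℝ → ℝ≥0∞} (hf : Measurable f) {c : ℝ} (hc : 0 < c) :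
    ∫⁻ r in Ioi 0, f (c * r) = ENNReal.ofReal c⁻¹ * ∫⁻ t in Ioi 0, f t := by
  have hpre : (c * ·) ⁻¹' Ioi (0 : ℝ) = Ioi 0 := by
    ext r; simp [mul_pos_iff_of_pos_left hc]
  have hmap : (volume.restrict (Ioi (0 : ℝ))).map (c * ·) =
      ENNReal.ofReal c⁻¹ • volume.restrict (Ioi 0) := by
    rw [← hpre, ← Measure.restrict_map (measurable_const_mul c) measurableSet_Ioi,
      Real.map_volume_mul_left hc.ne', Measure.restrict_smul, abs_of_pos (inv_pos.2 hc), hpre]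
  rw [← lintegral_map hf (measurable_const_mul c), hmap, lintegral_smul_measure, smul_eq_mul]

lemma lintegral_Ioi_pow_mul_comp_mul_left (n : ℕ) {f : ℝ → ℝ≥0∞} (hf : Measurable f) {c : ℝ}
    (hc : 0 < c) :
    ∫⁻ r in Ioi 0, ENNReal.ofReal (r ^ n) * f (c * r) =
      ENNReal.ofReal (c ^ (n + 1))⁻¹ * ∫⁻ t in Ioi 0, ENNReal.ofReal (t ^ n) * f t := by
  have hscaled : ∫⁻ r in Ioi 0, ENNReal.ofReal (r ^ n) * f (c * r) =
      ENNReal.ofReal c⁻¹ * ∫⁻ t in Ioi 0, ENNReal.ofReal ((t / c) ^ n) * f t := by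
    simpa only [mul_div_cancel_left₀ _ hc.ne'] using lintegral_Ioi_comp_mul_left
      (f := fun t => ENNReal.ofReal ((t / c) ^ n) * f t) (by fun_prop) hc
  rw [hscaled, ← lintegral_const_mul' _ _ ENNReal.ofReal_ne_top,
    ← lintegral_const_mul' _ _ ENNReal.ofReal_ne_top]
  refine setLIntegral_congr_fun measurableSet_Ioi fun t (ht : 0 < t) => ?_
  rw [← mul_assoc, ← mul_assoc, ← ENNReal.ofReal_mul (by positivity),
    ← ENNReal.ofReal_mul (by positivity)]
  congr 2
  rw [div_pow, pow_succ]
  field_simp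

section Polar

variable {E : Type*} [NormedAddCommGroup E] [NormedSpace ℝ E] [FiniteDimensional ℝ E]
  [MeasurableSpace E] [BorelSpace E] [Nontrivial E] (μ : Measure E) [μ.IsAddHaarMeasure]

local notation "dim" => Module.finrank ℝ

theorem lintegral_eq_lintegral_toSphere_lintegral_Ioi {F : E → ℝ≥0∞} (hF : Measurable F) :
    ∫⁻ x, F x ∂μ =
      ∫⁻ u, (∫⁻ r in Ioi (0 : ℝ), ENNReal.ofReal (r ^ (dim E - 1)) * F (r • u.1)) ∂μ.toSphere := by
  have hFpolar : Measurable fun y : sphere (0 : E) 1 × Ioi (0 : ℝ) => F (y.2.1 • y.1.1) :=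
    hF.comp ((measurable_subtype_coe.comp measurable_snd).smul
      (measurable_subtype_coe.comp measurable_fst))
  calc ∫⁻ x, F x ∂μ = ∫⁻ x : ({0}ᶜ : Set E), F x ∂μ.comap (↑) := by
        rw [lintegral_subtype_comap (measurableSet_singleton 0).compl, restrict_compl_singleton]
    _ = ∫⁻ y, F (y.2.1 • y.1.1) ∂μ.toSphere.prod (Measure.volumeIoiPow (dim E - 1)) := by
        rw [← μ.measurePreserving_homeomorphUnitSphereProd.lintegral_comp_emb
          (Homeomorph.measurableEmbedding _)]
        refine lintegral_congr fun x => ?_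
        simp [smul_smul, norm_ne_zero_iff.2 x.2]
    _ = ∫⁻ u, ∫⁻ r, F (r.1 • u.1) ∂Measure.volumeIoiPow (dim E - 1) ∂μ.toSphere :=
        lintegral_prod _ hFpolar.aemeasurable
    _ = _ := by
        refine lintegral_congr fun u => ?_
        rw [Measure.volumeIoiPow, lintegral_withDensity_eq_lintegral_mul _ (by fun_prop)
          (g := fun r : Ioi (0 : ℝ) => F (r.1 • u.1)) (by fun_prop)]
        exact lintegral_subtype_comap measurableSet_Ioi
          (fun r => ENNReal.ofReal (r ^ (dim E - 1)) * F (r • u.1))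


variable {g : E → ℝ} {f : ℝ → ℝ≥0∞}

theorem lintegral_comp_normalize_mul_comp_homogeneous {φ : E → ℝ≥0∞} (hφ : Measurable φ)
    (hg : Measurable g) (hf : Measurable f) (hgpos : ∀ x : E, x ≠ 0 → 0 < g x)
    (hghom : ∀ t : ℝ, 0 < t → ∀ x : E, x ≠ 0 → g (t • x) = t * g x) :
    ∫⁻ x, φ (‖x‖⁻¹ • x) * f (g x) ∂μ =
      (∫⁻ t in Ioi 0, ENNReal.ofReal (t ^ (dim E - 1)) * f t) *
        ∫⁻ u, φ u * ENNReal.ofReal (g u ^ dim E)⁻¹ ∂μ.toSphere := by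
  rw [lintegral_eq_lintegral_toSphere_lintegral_Ioi μ (by fun_prop),
    ← lintegral_const_mul _ (by fun_prop)]
  refine lintegral_congr fun u => ?_
  have hu : ‖u.1‖ = 1 := mem_sphere_zero_iff_norm.1 u.2
  have hu₀ : u.1 ≠ 0 := ne_zero_of_mem_unit_sphere u
  have hradial : ∀ r : ℝ, 0 < r →
      ENNReal.ofReal (r ^ (dim E - 1)) * (φ (‖r • u.1‖⁻¹ • r • u.1) * f (g (r • u.1))) =
        φ u * (ENNReal.ofReal (r ^ (dim E - 1)) * f (g u * r)) := fun r hr => by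
    rw [norm_smul, hu, Real.norm_of_nonneg hr.le, mul_one, smul_smul, inv_mul_cancel₀ hr.ne',
      one_smul, hghom r hr _ hu₀, mul_comm r]
    ring
  rw [setLIntegral_congr_fun measurableSet_Ioi hradial, lintegral_const_mul _ (by fun_prop),
    lintegral_Ioi_pow_mul_comp_mul_left _ hf (hgpos _ hu₀), Nat.sub_add_cancel Module.finrank_pos]
  ring

theorem lintegral_Ioi_mul_lintegral_toSphere_eq_withDensity_univ (hg : Measurable g)
    (hf : Measurable f) (hgpos : ∀ x : E, x ≠ 0 → 0 < g x)
    (hghom : ∀ t : ℝ, 0 < t → ∀ x : E, x ≠ 0 → g (t • x) = t * g x) :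
    (∫⁻ t in Ioi 0, ENNReal.ofReal (t ^ (dim E - 1)) * f t) *
        ∫⁻ u, ENNReal.ofReal (g u ^ dim E)⁻¹ ∂μ.toSphere =
      (μ.withDensity fun x => f (g x)) univ := by
  simpa [withDensity_apply] using
    (lintegral_comp_normalize_mul_comp_homogeneous μ measurable_one hg hf hgpos hghom).symm

theorem map_normalize_withDensity_comp_homogeneous (hg : Measurable g) (hf : Measurable f)
    (hgpos : ∀ x : E, x ≠ 0 → 0 < g x)
    (hghom : ∀ t : ℝ, 0 < t → ∀ x : E, x ≠ 0 → g (t • x) = t * g x) :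
    (μ.withDensity fun x => f (g x)).map (fun x => ‖x‖⁻¹ • x) =
      (μ.toSphere.withDensity fun u =>
        (∫⁻ t in Ioi 0, ENNReal.ofReal (t ^ (dim E - 1)) * f t) *
          ENNReal.ofReal (g u ^ dim E)⁻¹).map Subtype.val := by
  ext A hA
  have hnormalize : Measurable fun x : E => ‖x‖⁻¹ • x := by fun_prop
  rw [Measure.map_apply hnormalize hA, withDensity_apply _ (hnormalize hA),
    Measure.map_apply measurable_subtype_coe hA,
    withDensity_apply _ (measurable_subtype_coe hA), ← lintegral_indicator (hnormalize hA),
    ← lintegral_indicator (measurable_subtype_coe hA)]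
  calc ∫⁻ x, ((fun x : E => ‖x‖⁻¹ • x) ⁻¹' A).indicator (fun x => f (g x)) x ∂μ
      = ∫⁻ x, A.indicator 1 (‖x‖⁻¹ • x) * f (g x) ∂μ := by
        refine lintegral_congr fun x => ?_
        by_cases h : ‖x‖⁻¹ • x ∈ A <;> simp [h]
    _ = _ := by
        rw [lintegral_comp_normalize_mul_comp_homogeneous μ (measurable_one.indicator hA) hg hf
          hgpos hghom, ← lintegral_const_mul _ (by fun_prop)]
        refine lintegral_congr fun u => ?_
        by_cases h : u.1 ∈ A <;> simp [h]

end Polar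

/-- For a star-shaped distribution with density `f_G(g(x))` on `ℝᵖ`, the direction
`z' = x/‖x‖` has density `c₀ g(z')^{-p}` with respect to the surface measure on the
unit sphere, where `c₀ = ∫₀^∞ f_G(t) t^{p-1} dt = (∫_{S^{p-1}} g(u)^{-p} du)⁻¹`. -/
theorem stmt17 (p : ℕ) (hp : 0 < p)
    (g : EuclideanSpace ℝ (Fin p) → ℝ) (hgmeas : Measurable g)
    (hgpos : ∀ x : EuclideanSpace ℝ (Fin p), x ≠ 0 → 0 < g x)
    (hghom : ∀ t : ℝ, 0 < t → ∀ x : EuclideanSpace ℝ (Fin p), x ≠ 0 →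
      g (t • x) = t * g x)
    (fG : ℝ → ℝ) (hfGmeas : Measurable fG) (hfGnn : ∀ t, 0 ≤ fG t)
    (μ : Measure (EuclideanSpace ℝ (Fin p)))
    (hμ : μ = volume.withDensity fun x => ENNReal.ofReal (fG (g x)))
    (hprob : IsProbabilityMeasure μ)
    (c₀ : ℝ) (hc₀ : c₀ = ∫ t in Set.Ioi (0 : ℝ), fG t * t ^ (p - 1)) :
    (c₀ * ∫ u : Metric.sphere (0 : EuclideanSpace ℝ (Fin p)) 1,
        ((g u.1) ^ p)⁻¹ ∂(volume : Measure (EuclideanSpace ℝ (Fin p))).toSphere = 1) ∧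
    Measure.map (fun x => ‖x‖⁻¹ • x) μ =
      Measure.map Subtype.val
        (((volume : Measure (EuclideanSpace ℝ (Fin p))).toSphere).withDensity
          fun u => ENNReal.ofReal (c₀ * ((g u.1) ^ p)⁻¹)) := by
  have : Nonempty (Fin p) := ⟨⟨0, hp⟩⟩
  set C := ∫⁻ t in Ioi 0, ENNReal.ofReal (t ^ (p - 1)) * ENNReal.ofReal (fG t)
  set I := ∫⁻ u, ENNReal.ofReal (g u ^ p)⁻¹
    ∂(volume : Measure (EuclideanSpace ℝ (Fin p))).toSphere
  have hmap : μ.map (fun x => ‖x‖⁻¹ • x) =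
      (volume.toSphere.withDensity fun u => C * ENNReal.ofReal (g u ^ p)⁻¹).map Subtype.val := by
    simpa only [hμ, finrank_euclideanSpace_fin] using
      map_normalize_withDensity_comp_homogeneous volume hgmeas hfGmeas.ennreal_ofReal hgpos hghom
  have hCI : C * I = 1 := by
    simpa only [← hμ, finrank_euclideanSpace_fin, measure_univ] using
      lintegral_Ioi_mul_lintegral_toSphere_eq_withDensity_univ volume hgmeas
        hfGmeas.ennreal_ofReal hgpos hghom
  have hCtop : C ≠ ⊤ := by
    rw [ENNReal.eq_inv_of_mul_eq_one_left hCI]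
    exact ENNReal.inv_ne_top.2 (right_ne_zero_of_mul_eq_one hCI)
  have hc₀ : c₀ = C.toReal := by
    rw [hc₀, integral_eq_lintegral_of_nonneg_ae (ae_restrict_of_forall_mem measurableSet_Ioi
      fun t (ht : 0 < t) => mul_nonneg (hfGnn t) (pow_nonneg ht.le _)) (by fun_prop)]
    congr 1
    exact setLIntegral_congr_fun measurableSet_Ioi fun t _ => by
      rw [ENNReal.ofReal_mul (hfGnn t), mul_comm]
  have hI : ∫ u : Metric.sphere (0 : EuclideanSpace ℝ (Fin p)) 1,
        ((g u.1) ^ p)⁻¹ ∂(volume : Measure (EuclideanSpace ℝ (Fin p))).toSphere = I.toReal := by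
    refine integral_eq_lintegral_of_nonneg_ae (.of_forall fun u => ?_)
      (by fun_prop : Measurable fun u : sphere (0 : EuclideanSpace ℝ (Fin p)) 1 =>
        (g u ^ p)⁻¹).aestronglyMeasurable
    exact inv_nonneg.2 (pow_nonneg (hgpos _ (ne_zero_of_mem_unit_sphere u)).le _)
  refine ⟨by rw [hI, hc₀, ← ENNReal.toReal_mul, hCI, ENNReal.toReal_one], ?_⟩
  rw [hmap, hc₀]
  congr
  funext u
  rw [ENNReal.ofReal_mul ENNReal.toReal_nonneg, ENNReal.ofReal_toReal hCtop]
end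

section
/- Elliptically contoured case of the direction density: let Σ be a p×p positive definite matrix, g(x) = (xᵀΣ⁻¹x)^{1/2}, and suppose x has density f_G(g(x)) with respect to Lebesgue measure on ℝᵖ (a probability density). Then the direction z' = x/‖x‖ has density ω_p⁻¹ (det Σ)^{-1/2} (z'ᵀΣ⁻¹z')^{-p/2} with respect to the surface measure on S^{p-1}, where ω_p = 2π^{p/2}/Γ(p/2) is the total surface measure of the unit sphere; in particular this distribution does not depend on f_G. -/
/-!
In the polar coordinates `x = r • u` of `homeomorphUnitSphereProd`, an additive Haar measure
becomes `μ.toSphere ⊗ r ^ (p - 1) dr`. Since `g (r • u) = r * g u`, the substitution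
`s = r * g u` splits the radial integral of `f_G (g x)` as `(g u)⁻¹ ^ p * ∫ s ^ (p - 1) f_G s ds`:
the direction has density proportional to `(g u)⁻¹ ^ p`, and normalisation fixes the factor
independently of `f_G`. Taking `f_G` the indicator of `[0, 1)` instead shows that
`∫ (g u)⁻¹ ^ p dσ = p * vol {g < 1}`; as `g x = ‖Σ^{-1/2} x‖`, the ellipsoid `{g < 1}` has
volume `√(det Σ) * vol (ball 0 1)`, and `p * vol (ball 0 1) = ω_p`.
-/

open MeasureTheory Set Metric
open scoped ENNReal

lemma setLIntegral_Ioi_comp_mul_right_s19 {f : ℝ → ℝ≥0∞} (hf : Measurable f) {a : ℝ} (ha : 0 < a) :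
    ∫⁻ r in Ioi 0, f (r * a) = ENNReal.ofReal a⁻¹ * ∫⁻ r in Ioi 0, f r := by
  have hmap := setLIntegral_map (μ := volume) (measurableSet_Ioi (a := 0)) hf
    (measurable_mul_const a)
  rwa [preimage_mul_const_Ioi₀ _ ha, zero_div, Real.map_volume_mul_right ha.ne',
    abs_of_pos (inv_pos.2 ha), Measure.restrict_smul, lintegral_smul_measure, smul_eq_mul,
    eq_comm] at hmap

structure IsHomogeneousGauge {E : Type*} [NormedAddCommGroup E] [NormedSpace ℝ E]
    [MeasurableSpace E] (g : E → ℝ) : Prop where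
  measurable : Measurable g
  smul_of_pos : ∀ r : ℝ, 0 < r → ∀ x, g (r • x) = r * g x
  pos_of_ne_zero : ∀ x, x ≠ 0 → 0 < g x

lemma isHomogeneousGauge_norm_comp {E : Type*} [NormedAddCommGroup E] [NormedSpace ℝ E]
    [FiniteDimensional ℝ E] [MeasurableSpace E] [BorelSpace E] {T : E →ₗ[ℝ] E}
    (hT : LinearMap.det T ≠ 0) :
    IsHomogeneousGauge fun x ↦ ‖T x‖ where
  measurable := (LinearMap.continuous_of_finiteDimensional T).norm.measurable
  smul_of_pos r hr x := by rw [map_smul, norm_smul, Real.norm_of_nonneg hr.le]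
  pos_of_ne_zero x hx := by
    have hinj := ((Module.End.isUnit_iff T).1
      ((LinearMap.isUnit_iff_isUnit_det T).2 (isUnit_iff_ne_zero.2 hT))).1
    exact norm_pos_iff.2 ((map_ne_zero_iff T hinj).2 hx)

namespace MeasureTheory.Measure

lemma lintegral_volumeIoiPow (n : ℕ) {f : ℝ → ℝ≥0∞} (hf : Measurable f) :
    ∫⁻ r, f r ∂volumeIoiPow n = ∫⁻ r in Ioi 0, ENNReal.ofReal (r ^ n) * f r := by
  rw [volumeIoiPow, lintegral_withDensity_eq_lintegral_mul _ (by fun_prop)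
    (g := fun r : Ioi (0 : ℝ) ↦ f r) (hf.comp measurable_subtype_coe)]
  exact lintegral_subtype_comap measurableSet_Ioi fun r ↦ ENNReal.ofReal (r ^ n) * f r

lemma lintegral_volumeIoiPow_comp_mul_right (n : ℕ) {f : ℝ → ℝ≥0∞} (hf : Measurable f)
    {a : ℝ} (ha : 0 < a) :
    ∫⁻ r, f (r * a) ∂volumeIoiPow n =
      ENNReal.ofReal (a⁻¹ ^ (n + 1)) * ∫⁻ r, f r ∂volumeIoiPow n := by
  have hpow (r : ℝ) : ENNReal.ofReal (r ^ n) * f (r * a)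
      = ENNReal.ofReal (a⁻¹ ^ n) * (ENNReal.ofReal ((r * a) ^ n) * f (r * a)) := by
    rw [← mul_assoc, ← ENNReal.ofReal_mul (by positivity), ← mul_pow]
    congr 3
    field_simp
  rw [lintegral_volumeIoiPow n (f := fun r ↦ f (r * a)) (by fun_prop), lintegral_volumeIoiPow n hf]
  simp_rw [hpow]
  rw [lintegral_const_mul _ (by fun_prop),
    setLIntegral_Ioi_comp_mul_right_s19 (f := fun r ↦ ENNReal.ofReal (r ^ n) * f r) (by fun_prop) ha,
    ← mul_assoc, ← ENNReal.ofReal_mul (by positivity), pow_succ]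

variable {E : Type*} [NormedAddCommGroup E] [NormedSpace ℝ E] [FiniteDimensional ℝ E]
  [Nontrivial E] [MeasurableSpace E]

lemma lintegral_volumeIoiPow_comp_smul_sphere {g : E → ℝ} (hg : IsHomogeneousGauge g)
    {G : ℝ → ℝ≥0∞} (hG : Measurable G) (u : sphere (0 : E) 1) :
    ∫⁻ r, G (g (r.1 • u.1)) ∂volumeIoiPow (Module.finrank ℝ E - 1) =
      ENNReal.ofReal ((g u)⁻¹ ^ Module.finrank ℝ E) *
        ∫⁻ r, G r.1 ∂volumeIoiPow (Module.finrank ℝ E - 1) := by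
  have hscale := lintegral_volumeIoiPow_comp_mul_right (Module.finrank ℝ E - 1) hG
    (hg.pos_of_ne_zero u (ne_zero_of_mem_unit_sphere u))
  rw [Nat.sub_add_cancel Module.finrank_pos] at hscale
  rw [← hscale]
  exact lintegral_congr fun r ↦ by rw [hg.smul_of_pos r.1 r.2]

variable [BorelSpace E] (μ : Measure E) [μ.IsAddHaarMeasure]

theorem lintegral_eq_lintegral_toSphere_volumeIoiPow {f : E → ℝ≥0∞} (hf : Measurable f) :
    ∫⁻ x, f x ∂μ = ∫⁻ u, ∫⁻ r, f (r.1 • u.1)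
      ∂volumeIoiPow (Module.finrank ℝ E - 1) ∂μ.toSphere := calc
  ∫⁻ x, f x ∂μ = ∫⁻ x : ({0}ᶜ : Set E), f x ∂μ.comap (↑) := by
    rw [lintegral_subtype_comap (measurableSet_singleton _).compl, restrict_compl_singleton]
  _ = ∫⁻ p, f (p.2.1 • p.1.1) ∂μ.toSphere.prod (volumeIoiPow (Module.finrank ℝ E - 1)) := by
    rw [← μ.measurePreserving_homeomorphUnitSphereProd.lintegral_comp_emb
      (Homeomorph.measurableEmbedding _)]
    refine lintegral_congr fun x ↦ ?_
    simp [smul_inv_smul₀ (norm_ne_zero_iff.2 x.2)]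
  _ = _ := lintegral_prod _ (by fun_prop)

variable {μ} {g : E → ℝ}

theorem lintegral_comp_gauge (hg : IsHomogeneousGauge g) {G : ℝ → ℝ≥0∞} (hG : Measurable G) :
    ∫⁻ x, G (g x) ∂μ = (∫⁻ u, ENNReal.ofReal ((g u)⁻¹ ^ Module.finrank ℝ E) ∂μ.toSphere) *
      ∫⁻ r, G r.1 ∂volumeIoiPow (Module.finrank ℝ E - 1) := by
  have hg_meas := hg.measurable
  rw [lintegral_eq_lintegral_toSphere_volumeIoiPow μ (f := fun x ↦ G (g x)) (by fun_prop),
    ← lintegral_mul_const _ (by fun_prop)]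
  exact lintegral_congr (lintegral_volumeIoiPow_comp_smul_sphere hg hG)

theorem map_inv_norm_smul_withDensity_comp_gauge (hg : IsHomogeneousGauge g) {G : ℝ → ℝ≥0∞}
    (hG : Measurable G) :
    (μ.withDensity fun x ↦ G (g x)).map (fun x ↦ ‖x‖⁻¹ • x) =
      (μ.toSphere.withDensity fun u ↦ ENNReal.ofReal ((g u)⁻¹ ^ Module.finrank ℝ E) *
        ∫⁻ r, G r.1 ∂volumeIoiPow (Module.finrank ℝ E - 1)).map Subtype.val := by
  ext s hs
  have hdir : Measurable fun x : E ↦ ‖x‖⁻¹ • x := by fun_prop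
  rw [map_apply hdir hs, map_apply measurable_subtype_coe hs, withDensity_apply _ (hdir hs),
    withDensity_apply _ (measurable_subtype_coe hs), ← lintegral_indicator (hdir hs),
    lintegral_eq_lintegral_toSphere_volumeIoiPow μ
      (f := ((fun x : E ↦ ‖x‖⁻¹ • x) ⁻¹' s).indicator fun x ↦ G (g x))
      ((hG.comp hg.measurable).indicator (hdir hs)),
    ← lintegral_indicator (measurable_subtype_coe hs)]
  refine lintegral_congr fun u ↦ ?_
  have hdir_smul (r : Ioi (0 : ℝ)) : ‖r.1 • u.1‖⁻¹ • r.1 • u.1 = u.1 := by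
    rw [norm_smul, norm_eq_of_mem_sphere u, mul_one, Real.norm_of_nonneg (le_of_lt r.2),
      inv_smul_smul₀ (ne_of_gt r.2)]
  by_cases hu : u.1 ∈ s
  · simp only [indicator_of_mem (show u ∈ Subtype.val ⁻¹' s from hu),
      indicator_of_mem (show _ ∈ (fun x : E ↦ ‖x‖⁻¹ • x) ⁻¹' s from (hdir_smul _).symm ▸ hu)]
    exact lintegral_volumeIoiPow_comp_smul_sphere hg hG u
  · simp only [indicator_of_notMem (show u ∉ Subtype.val ⁻¹' s from hu),
      indicator_of_notMem (show _ ∉ (fun x : E ↦ ‖x‖⁻¹ • x) ⁻¹' s from (hdir_smul _).symm ▸ hu),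
      lintegral_zero]

theorem map_inv_norm_smul_withDensity_comp_gauge_of_lintegral_eq_one (hg : IsHomogeneousGauge g)
    {G : ℝ → ℝ≥0∞} (hG : Measurable G) (h_one : ∫⁻ x, G (g x) ∂μ = 1) :
    (μ.withDensity fun x ↦ G (g x)).map (fun x ↦ ‖x‖⁻¹ • x) =
      (μ.toSphere.withDensity fun u ↦ ENNReal.ofReal ((g u)⁻¹ ^ Module.finrank ℝ E) *
        (∫⁻ v, ENNReal.ofReal ((g v)⁻¹ ^ Module.finrank ℝ E) ∂μ.toSphere)⁻¹).map Subtype.val := by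
  rw [lintegral_comp_gauge hg hG, mul_comm] at h_one
  rw [map_inv_norm_smul_withDensity_comp_gauge hg hG, ENNReal.eq_inv_of_mul_eq_one_left h_one]

theorem finrank_mul_measure_gauge_lt_one (hg : IsHomogeneousGauge g) :
    Module.finrank ℝ E * μ {x | g x < 1} =
      ∫⁻ u, ENNReal.ofReal ((g u)⁻¹ ^ Module.finrank ℝ E) ∂μ.toSphere := by
  have hball : ∫⁻ r, (Iio 1).indicator 1 r.1 ∂volumeIoiPow (Module.finrank ℝ E - 1) =
      (Module.finrank ℝ E : ℝ≥0∞)⁻¹ := calc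
    _ = volumeIoiPow (Module.finrank ℝ E - 1) (Iio ⟨1, mem_Ioi.2 one_pos⟩) :=
      lintegral_indicator_one measurableSet_Iio
    _ = _ := by
      rw [volumeIoiPow_apply_Iio, one_pow, Nat.cast_pred Module.finrank_pos, sub_add_cancel,
        one_div, ENNReal.ofReal_inv_of_pos (by simp [Module.finrank_pos]),
        ENNReal.ofReal_natCast]
  have hsub : μ {x | g x < 1} = ∫⁻ x, (Iio 1).indicator 1 (g x) ∂μ :=
    (lintegral_indicator_one (hg.measurable measurableSet_Iio)).symm
  rw [hsub, lintegral_comp_gauge hg (measurable_one.indicator measurableSet_Iio), hball, mul_comm,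
    mul_assoc, ENNReal.inv_mul_cancel (by simp [Module.finrank_pos.ne'])
    (ENNReal.natCast_ne_top _), mul_one]

theorem lintegral_toSphere_norm_comp_inv_pow {T : E →ₗ[ℝ] E} (hT : LinearMap.det T ≠ 0) :
    ∫⁻ u, ENNReal.ofReal (‖T u‖⁻¹ ^ Module.finrank ℝ E) ∂μ.toSphere =
      ENNReal.ofReal |(LinearMap.det T)⁻¹| * μ.toSphere univ := by
  have hball : {x | ‖T x‖ < 1} = T ⁻¹' ball 0 1 := by ext; simp
  rw [← finrank_mul_measure_gauge_lt_one (isHomogeneousGauge_norm_comp hT), hball,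
    addHaar_preimage_linearMap μ hT, toSphere_apply_univ, mul_left_comm]

end MeasureTheory.Measure

theorem InnerProductSpace.volume_toSphere_univ {E : Type*} [NormedAddCommGroup E]
    [InnerProductSpace ℝ E] [FiniteDimensional ℝ E] [Nontrivial E] [MeasurableSpace E]
    [BorelSpace E] :
    (volume : Measure E).toSphere univ = ENNReal.ofReal
      (2 * Real.pi ^ ((Module.finrank ℝ E : ℝ) / 2) /
        Real.Gamma ((Module.finrank ℝ E : ℝ) / 2)) := by
  rw [Measure.toSphere_apply_univ, InnerProductSpace.volume_ball, ENNReal.ofReal_one, one_pow,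
    one_mul, ← ENNReal.ofReal_natCast, ← ENNReal.ofReal_mul (by positivity)]
  congr 1
  have hd : (0 : ℝ) < Module.finrank ℝ E / 2 := by simp [Module.finrank_pos]
  have hd' : (Module.finrank ℝ E : ℝ) ≠ 0 := by simp [Module.finrank_pos.ne']
  rw [Real.Gamma_add_one hd.ne', Real.sqrt_eq_rpow, ← Real.rpow_natCast,
    ← Real.rpow_mul Real.pi_pos.le]
  field_simp

lemma Real.sq_rpow_neg_natCast_div_two {a : ℝ} (ha : 0 ≤ a) (n : ℕ) :
    (a ^ 2) ^ (-(n : ℝ) / 2) = a⁻¹ ^ n := by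
  rw [← Real.rpow_natCast_mul ha, show ((2 : ℕ) : ℝ) * (-(n : ℝ) / 2) = -(n : ℕ) by push_cast; ring,
    Real.rpow_neg ha, Real.rpow_natCast, inv_pow]

open scoped Matrix MatrixOrder in
theorem Matrix.PosSemidef.norm_toEuclideanLin_sqrt_sq {n : Type*} [Fintype n] [DecidableEq n]
    {A : Matrix n n ℝ} (hA : A.PosSemidef) (x : EuclideanSpace ℝ n) :
    ‖toEuclideanLin (CFC.sqrt A) x‖ ^ 2 = ∑ i, ∑ j, A i j * x i * x j := by
  have hBB : CFC.sqrt A * CFC.sqrt A = A := CFC.sqrt_mul_sqrt_self A hA.nonneg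
  have hBt : (CFC.sqrt A)ᵀ = CFC.sqrt A :=
    (nonneg_iff_posSemidef.1 (CFC.sqrt_nonneg A)).isHermitian
  rw [← real_inner_self_eq_norm_sq, EuclideanSpace.inner_eq_star_dotProduct, star_trivial,
    ofLp_toLpLin, toLin'_apply]
  have hquad : ∑ i, ∑ j, A i j * x i * x j = x.ofLp ⬝ᵥ (A *ᵥ x.ofLp) := by
    simp only [dotProduct, mulVec, Finset.mul_sum]
    exact Finset.sum_congr rfl fun i _ ↦ Finset.sum_congr rfl fun j _ ↦ by ring
  rw [hquad]
  conv_rhs => rw [← hBB, ← mulVec_mulVec, dotProduct_mulVec, ← mulVec_transpose, hBt]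

open scoped Matrix MatrixOrder in
theorem Matrix.PosDef.abs_inv_det_toEuclideanLin_sqrt_inv {n : Type*} [Fintype n] [DecidableEq n]
    {S : Matrix n n ℝ} (hS : S.PosDef) :
    |(LinearMap.det (toEuclideanLin (CFC.sqrt S⁻¹)))⁻¹| = √S.det := by
  rw [LinearMap.det_toLpLin, hS.inv.posSemidef.det_sqrt, RCLike.sqrt_real, det_nonsing_inv,
    Ring.inverse_eq_inv, Real.sqrt_inv, inv_inv, abs_of_nonneg (Real.sqrt_nonneg _)]

theorem stmt19_general (p : ℕ) (hp : 0 < p)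
    (S : Matrix (Fin p) (Fin p) ℝ) (hS : S.PosDef)
    (g : EuclideanSpace ℝ (Fin p) → ℝ)
    (hg : ∀ x : EuclideanSpace ℝ (Fin p),
      g x = Real.sqrt (∑ i, ∑ j, S⁻¹ i j * x i * x j))
    (fG : ℝ → ℝ) (hfGmeas : Measurable fG)
    (μ : Measure (EuclideanSpace ℝ (Fin p)))
    (hμ : μ = volume.withDensity fun x => ENNReal.ofReal (fG (g x)))
    (hprob : IsProbabilityMeasure μ) :
    Measure.map (fun x => ‖x‖⁻¹ • x) μ =
      Measure.map Subtype.val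
        (((volume : Measure (EuclideanSpace ℝ (Fin p))).toSphere).withDensity
          fun u => ENNReal.ofReal
            ((2 * Real.pi ^ ((p : ℝ) / 2) / Real.Gamma ((p : ℝ) / 2))⁻¹ *
              (Real.sqrt S.det)⁻¹ *
              (∑ i, ∑ j, S⁻¹ i j * u.1 i * u.1 j) ^ (-(p : ℝ) / 2))) := by
  have : Nonempty (Fin p) := ⟨⟨0, hp⟩⟩
  obtain ⟨T, hquad, hdetT⟩ : ∃ T : EuclideanSpace ℝ (Fin p) →ₗ[ℝ] EuclideanSpace ℝ (Fin p),
      (∀ x, ‖T x‖ ^ 2 = ∑ i, ∑ j, S⁻¹ i j * x i * x j) ∧ |(LinearMap.det T)⁻¹| = √S.det :=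
    ⟨_, hS.inv.posSemidef.norm_toEuclideanLin_sqrt_sq, hS.abs_inv_det_toEuclideanLin_sqrt_inv⟩
  have hdet : 0 < √S.det := Real.sqrt_pos.2 hS.det_pos
  have hT : LinearMap.det T ≠ 0 := fun h ↦ hdet.ne' (by rw [← hdetT, h, inv_zero, abs_zero])
  obtain rfl : g = fun x ↦ ‖T x‖ :=
    funext fun x ↦ by rw [hg, ← hquad, Real.sqrt_sq (norm_nonneg _)]
  have h_one : ∫⁻ x, ENNReal.ofReal (fG ‖T x‖) = 1 := by
    rw [← hprob.measure_univ, hμ, withDensity_apply _ MeasurableSet.univ, Measure.restrict_univ]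
  rw [hμ]
  beta_reduce
  rw [Measure.map_inv_norm_smul_withDensity_comp_gauge_of_lintegral_eq_one
    (isHomogeneousGauge_norm_comp hT) (G := fun t ↦ ENNReal.ofReal (fG t)) (by fun_prop) h_one,
    Measure.lintegral_toSphere_norm_comp_inv_pow hT, InnerProductSpace.volume_toSphere_univ,
    finrank_euclideanSpace_fin, hdetT]
  congr 2 with u
  have hΓ := Real.Gamma_pos_of_pos (show 0 < (p : ℝ) / 2 by positivity)
  rw [← hquad, Real.sq_rpow_neg_natCast_div_two (norm_nonneg _),
    ← ENNReal.ofReal_mul (by positivity), ← ENNReal.ofReal_inv_of_pos (by positivity),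
    ← ENNReal.ofReal_mul (by positivity), mul_inv]
  congr 1
  ring

/-- Elliptically contoured case: if `x` has density `f_G((xᵀΣ⁻¹x)^{1/2})` with respect
to Lebesgue measure on `ℝᵖ` with `Σ` positive definite, then the direction `z' = x/‖x‖`
has density `ω_p⁻¹ (det Σ)^{-1/2} (z'ᵀΣ⁻¹z')^{-p/2}` with respect to the surface
measure on the unit sphere, where `ω_p = 2π^{p/2}/Γ(p/2)`; in particular this does not
depend on `f_G`. -/
theorem stmt19 (p : ℕ) (hp : 0 < p)
    (S : Matrix (Fin p) (Fin p) ℝ) (hS : S.PosDef)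
    (g : EuclideanSpace ℝ (Fin p) → ℝ)
    (hg : ∀ x : EuclideanSpace ℝ (Fin p),
      g x = Real.sqrt (∑ i, ∑ j, S⁻¹ i j * x i * x j))
    (fG : ℝ → ℝ) (hfGmeas : Measurable fG) (hfGnn : ∀ t, 0 ≤ fG t)
    (μ : Measure (EuclideanSpace ℝ (Fin p)))
    (hμ : μ = volume.withDensity fun x => ENNReal.ofReal (fG (g x)))
    (hprob : IsProbabilityMeasure μ) :
    Measure.map (fun x => ‖x‖⁻¹ • x) μ =
      Measure.map Subtype.val
        (((volume : Measure (EuclideanSpace ℝ (Fin p))).toSphere).withDensity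
          fun u => ENNReal.ofReal
            ((2 * Real.pi ^ ((p : ℝ) / 2) / Real.Gamma ((p : ℝ) / 2))⁻¹ *
              (Real.sqrt S.det)⁻¹ *
              (∑ i, ∑ j, S⁻¹ i j * u.1 i * u.1 j) ^ (-(p : ℝ) / 2))) :=
  stmt19_general p hp S hS g hg fG hfGmeas μ hμ hprob
end
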